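/- In the multi-target detection model with an arbitrary spacing distribution (non-overlap condition s_k − s_{k−1} ≥ L), for every 0 ≤ l ≤ L−1 the deterministic identity a²_{s∗x}[l] = ρ₀ a_x²[l] + ((M−1)L/N) Σ_{j=L}^{L+l−1} ξ[j] a_x²[j−l] holds, where ξ is the pair separation function of s. -/

import Mathlib

/-- The sequence `z` of length `m`, zero-padded to all of `ℤ`. -/
noncomputable def zpad (m : ℕ) (z : ℕ → ℝ) : ℤ → ℝ :=
  fun i => if 0 ≤ i ∧ i < (m : ℤ) then z i.toNat else 0

/-- Second-order autocorrelation of the length-`m` sequence `z` with integer shift `l`: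
`a_z²[l] = (1/m) Σ_{i=0}^{m−1} z[i] z[i+l]`, with `z` extended by zero. -/
noncomputable def acorr2 (m : ℕ) (z : ℕ → ℝ) (l : ℤ) : ℝ :=
  (1 / (m : ℝ)) * ∑ i ∈ Finset.range m, zpad m z i * zpad m z (i + l)

/-- The (zero-padded) linear convolution `s∗x` of the binary sequence `s` with the signal `x`
of length `L`, where `s` has `M` nonzero entries at the positions `p 0 < p 1 < ⋯ < p (M−1)`:
`(s∗x)[i] = Σ_k x[i − p k]`, with `x` extended by zero. -/
noncomputable def sconv (L M : ℕ) (x : ℕ → ℝ) (p : Fin M → ℕ) : ℤ → ℝ :=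
  fun i => ∑ k : Fin M, zpad L x (i - (p k : ℤ))

/-- The pair separation function `ξ[j]` of the binary sequence with `M` nonzero entries at the
positions `p 0 < p 1 < ⋯ < p (M−1)`:
`ξ[j] = (1/(M−1)) · #{k ∈ {1,…,M−1} : p k − p (k−1) = j}`. -/
noncomputable def pairSep (M : ℕ) (p : Fin M → ℕ) (j : ℕ) : ℝ :=
  (Finset.univ.filter (fun k : Fin (M - 1) =>
      p ⟨(k : ℕ) + 1, by have := k.isLt; omega⟩ = p ⟨(k : ℕ), by have := k.isLt; omega⟩ + j)).card
    / ((M : ℝ) - 1)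

/-!
Expanding the product of the two sums over occurrences, each ordered pair `(k, k')` contributes
`L · a_x²[l + s_k − s_{k'}]`, because every copy of `x` lies inside `[0, N)`. Since `a_x²`
vanishes outside `(−L, L)`, the separation `s_k − s_{k−1} ≥ L` together with `l < L` kills every
pair except `k' = k`, giving `a_x²[l]`, and `k' = k + 1`, giving `a_x²[s_{k+1} − s_k − l]` by
symmetry of `a_x²`; the latter vanishes unless the spacing lies in `[L, L + l)`. Grouping
consecutive pairs by spacing produces the factor `(M − 1) ξ[j]`.
-/

open Finset

section Autocorrelation

variable {m : ℕ} {z : ℕ → ℝ}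

lemma zpad_eq_zero {i : ℤ} (h : ¬(0 ≤ i ∧ i < (m : ℤ))) : zpad m z i = 0 :=
  if_neg h

lemma natCast_mul_acorr2 (a : ℤ) :
    (m : ℝ) * acorr2 m z a = ∑ t ∈ range m, zpad m z t * zpad m z (t + a) := by
  rcases Nat.eq_zero_or_pos m with rfl | hm
  · simp
  · rw [acorr2, ← mul_assoc, mul_one_div_cancel (by positivity), one_mul]

lemma sum_range_zpad_sub_mul {N c : ℕ} (hc : c + m ≤ N) (g : ℤ → ℝ) :
    ∑ i ∈ range N, zpad m z (i - c) * g i = ∑ t ∈ range m, zpad m z t * g (t + c) := by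
  have hwindow : Ico c (c + m) ⊆ range N := fun i hi => by
    simp only [mem_Ico, mem_range] at hi ⊢; omega
  rw [← sum_subset hwindow fun i _ hi => by
    rw [zpad_eq_zero (by simp only [mem_Ico] at hi; omega), zero_mul], sum_Ico_eq_sum_range]
  refine sum_congr (by simp) fun t _ => ?_
  push_cast
  ring_nf

lemma acorr2_eq_zero {a : ℤ} (h : m ≤ a.natAbs) : acorr2 m z a = 0 := by
  refine mul_eq_zero_of_right _ (sum_eq_zero fun t ht => ?_)
  rw [zpad_eq_zero (i := t + a) (by simp only [mem_range] at ht; omega), mul_zero]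

lemma acorr2_neg (a : ℤ) : acorr2 m z (-a) = acorr2 m z a := by
  suffices key : ∀ n : ℕ, acorr2 m z (-n) = acorr2 m z n by
    obtain ⟨n, rfl | rfl⟩ := a.eq_nat_or_neg
    · exact key n
    · rw [neg_neg, key]
  intro n
  refine congrArg (1 / (m : ℝ) * ·) ?_
  calc ∑ t ∈ range m, zpad m z t * zpad m z (t + -n)
      = ∑ i ∈ range (n + m), zpad m z i * zpad m z (i - n) := by
        simpa [sub_eq_add_neg] using
          (sum_range_zpad_sub_mul (z := z) (c := 0) (by omega) fun i => zpad m z (i - n)).symm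
    _ = ∑ i ∈ range (n + m), zpad m z (i - n) * zpad m z i :=
        sum_congr rfl fun _ _ => mul_comm _ _
    _ = ∑ t ∈ range m, zpad m z t * zpad m z (t + n) :=
        sum_range_zpad_sub_mul le_rfl _

end Autocorrelation

lemma sum_comp_eq_sum_card_filter_mul {ι : Type*} [Fintype ι] (g : ι → ℕ) (F : ℕ → ℝ)
    (t : Finset ℕ) (hF : ∀ i, g i ∉ t → F (g i) = 0) :
    ∑ i, F (g i) = ∑ j ∈ t, #{i | g i = j} * F j := by
  simp_rw [← nsmul_eq_mul, ← sum_const, sum_fiberwise_eq_sum_filter']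
  exact (sum_filter_of_ne fun i _ hi => by_contra fun hg => hi (hF i hg)).symm

lemma sum_sconv_mul_sconv {L M N : ℕ} (x : ℕ → ℝ) {p : Fin M → ℕ} (hin : ∀ k, p k + L ≤ N)
    (a : ℤ) :
    ∑ i ∈ range N, sconv L M x p i * sconv L M x p (i + a)
      = L * ∑ k, ∑ k', acorr2 L x (a + p k - p k') := by
  simp only [sconv, sum_mul_sum]
  rw [mul_sum, sum_comm]
  refine sum_congr rfl fun k _ => ?_
  rw [mul_sum, sum_comm]
  refine sum_congr rfl fun k' _ => ?_
  rw [sum_range_zpad_sub_mul (hin k) fun i => zpad L x (i + a - p k'), natCast_mul_acorr2]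
  refine sum_congr rfl fun t _ => ?_
  ring_nf

section Separated

variable {L M : ℕ} {p : Fin M → ℕ}

def SeparatedBy (L : ℕ) (p : Fin M → ℕ) : Prop :=
  ∀ k : ℕ, ∀ hk : k + 1 < M, p ⟨k, Nat.lt_of_succ_lt hk⟩ + L ≤ p ⟨k + 1, hk⟩

lemma SeparatedBy.add_le_of_lt (hsep : SeparatedBy L p) {i j : Fin M} (hij : i < j) :
    p i + L ≤ p j := by
  obtain ⟨i, hi⟩ := i
  obtain ⟨j, hj⟩ := j
  change i + 1 ≤ j at hij
  induction j, hij using Nat.le_induction with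
  | base => exact hsep i hj
  | succ j _ ih => linarith [ih (by omega), hsep j hj]

lemma sum_acorr2_add_sub_eq (hsep : SeparatedBy L p) (x : ℕ → ℝ) {l : ℕ} (hl : l ≤ L) (k : Fin M) :
    ∑ k', acorr2 L x ((l : ℤ) + p k - p k')
      = acorr2 L x l + if hk : (k : ℕ) + 1 < M then acorr2 L x ((p ⟨k + 1, hk⟩ : ℤ) - p k - l)
          else 0 := by
  have hfar : ∀ k' : Fin M, k' ≠ k → (k' : ℕ) ≠ k + 1 → acorr2 L x ((l : ℤ) + p k - p k') = 0 := by
    intro k' hne hne'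
    apply acorr2_eq_zero
    rcases lt_or_gt_of_ne hne with hlt | hgt
    · have := hsep.add_le_of_lt hlt
      omega
    · have hk : (k : ℕ) + 1 < M := by omega
      have hnext : p k + L ≤ p ⟨k + 1, hk⟩ := hsep k hk
      have hbeyond := hsep.add_le_of_lt (show (⟨k + 1, hk⟩ : Fin M) < k' by
        rw [Fin.lt_def, Fin.val_mk]; omega)
      omega
  split_ifs with hk
  · rw [Fintype.sum_eq_add k ⟨k + 1, hk⟩ (by simp [Fin.ext_iff])
      fun k' ⟨hne, hne'⟩ => hfar k' hne (by simpa [Fin.ext_iff] using hne'),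
      ← acorr2_neg ((p ⟨k + 1, hk⟩ : ℤ) - p k - l)]
    congr 2 <;> ring
  · rw [Fintype.sum_eq_single k fun k' hne => hfar k' hne (by omega)]
    simp

def spacing (p : Fin M → ℕ) (k : Fin (M - 1)) : ℕ :=
  p ⟨k + 1, by omega⟩ - p ⟨k, by omega⟩

lemma sub_one_mul_pairSep (hsep : SeparatedBy L p) (j : ℕ) :
    ((M : ℝ) - 1) * pairSep M p j = #{k | spacing p k = j} := by
  rcases lt_or_ge M 2 with hM | hM
  -- for `M ≤ 1` there are no consecutive pairs, whatever `pairSep` divides by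
  · have : IsEmpty (Fin (M - 1)) := ⟨fun k => absurd k.isLt (by omega)⟩
    simp [pairSep]
  have hcount : #{k : Fin (M - 1) | p ⟨k + 1, by omega⟩ = p ⟨k, by omega⟩ + j}
      = #{k | spacing p k = j} := by
    congr 1
    refine filter_congr fun k _ => ?_
    have := hsep k (by omega)
    unfold spacing
    omega
  have hM' : (2 : ℝ) ≤ M := by exact_mod_cast hM
  rw [pairSep, hcount, mul_div_cancel₀ _ (by linarith)]

lemma sum_dite_acorr2_eq_sum_spacing (hsep : SeparatedBy L p) (x : ℕ → ℝ) (l : ℕ) :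
    ∑ k : Fin M, (if hk : (k : ℕ) + 1 < M then acorr2 L x ((p ⟨k + 1, hk⟩ : ℤ) - p k - l) else 0)
      = ∑ k : Fin (M - 1), acorr2 L x ((spacing p k : ℤ) - l) := by
  refine (Fintype.sum_of_injective (Fin.castLE (Nat.sub_le M 1)) (Fin.castLE_injective _) _ _
    (fun k hk => dif_neg fun hlt => hk ⟨⟨k, by omega⟩, rfl⟩) fun k => ?_).symm
  have hk : (k : ℕ) + 1 < M := by omega
  have := hsep k hk
  simp only [Fin.val_castLE, dif_pos hk, spacing]
  rw [Nat.cast_sub (by omega)]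
  rfl

lemma sum_sum_acorr2_add_sub_eq (hsep : SeparatedBy L p) (x : ℕ → ℝ) {l : ℕ} (hl : l ≤ L) :
    ∑ k, ∑ k', acorr2 L x ((l : ℤ) + p k - p k')
      = M * acorr2 L x l + ∑ k : Fin (M - 1), acorr2 L x ((spacing p k : ℤ) - l) := by
  simp_rw [sum_acorr2_add_sub_eq hsep x hl, sum_add_distrib, sum_dite_acorr2_eq_sum_spacing hsep,
    sum_const, card_univ, Fintype.card_fin, nsmul_eq_mul]

lemma sum_acorr2_spacing_sub_eq (hsep : SeparatedBy L p) (x : ℕ → ℝ) (l : ℕ) :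
    ∑ k : Fin (M - 1), acorr2 L x ((spacing p k : ℤ) - l)
      = ((M : ℝ) - 1) * ∑ j ∈ Ico L (L + l), pairSep M p j * acorr2 L x ((j : ℤ) - l) := by
  rw [sum_comp_eq_sum_card_filter_mul (spacing p) (fun j => acorr2 L x ((j : ℤ) - l))
    (Ico L (L + l)) fun k hk => acorr2_eq_zero ?_, mul_sum]
  · simp_rw [← mul_assoc, sub_one_mul_pairSep hsep]
  · have := hsep k (by omega)
    simp only [mem_Ico, spacing, not_and_or] at hk ⊢
    omega

end Separated

/-- Multi-target detection with an arbitrary spacing distribution (non-overlap condition: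
consecutive occurrences separated by at least `L`): for every `0 ≤ l ≤ L−1`,
`a²_{s∗x}[l] = ρ₀ a_x²[l] + ((M−1)L/N) Σ_{j=L}^{L+l−1} ξ[j] a_x²[j−l]`,
where `ρ₀ = ML/N` and `ξ` is the pair separation function of `s`. -/
theorem mtd_second_order_arbitrary_spacing
    (L N M : ℕ)
    (x : ℕ → ℝ) (p : Fin M → ℕ)
    (hsep : ∀ k : ℕ, ∀ hk : k + 1 < M, p ⟨k, by omega⟩ + L ≤ p ⟨k + 1, hk⟩)
    (hin : ∀ k : Fin M, p k + L ≤ N)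
    (l : ℕ) (hl : l < L) :
    (1 / (N : ℝ)) * ∑ i ∈ Finset.range N, sconv L M x p i * sconv L M x p (i + l)
      = ((M : ℝ) * L / N) * acorr2 L x l
        + (((M : ℝ) - 1) * L / N) *
            ∑ j ∈ Finset.Ico L (L + l), pairSep M p j * acorr2 L x ((j : ℤ) - l) := by
  rw [sum_sconv_mul_sconv x hin, sum_sum_acorr2_add_sub_eq hsep x hl.le,
    sum_acorr2_spacing_sub_eq hsep]
  ring
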